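/- arXiv:1407.2576 — 6 statements merged into one kernel-verified Lean document; each statement's English description precedes it below -/
import Mathlib

section
/- Let K ≥ 2, δ ∈ [0,1], and let k1 ≠ k2 be two coordinate indices in {1,…,K}. The Lebesgue volume of the region R̂^{k1,k2}(δ) = {x ∈ [0,1]^K : x^{k1} ≥ x^{k2} − δ, and x^{k1} ≥ x^k for all k ∉ {k1,k2}} equals (1/(K−1))·(1 − (1−δ)^K/K). -/
/-!
Fix the coordinate `x k1 = t`. The remaining coordinates then range over a box: the `k2`-th
one over `[0, min (t + δ) 1]` and the other `K - 2` over `[0, t]`. By Fubini the volume is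
`∫₀¹ min (t + δ) 1 * t ^ (K - 2) dt`, which is evaluated by splitting the integral at
`t = 1 - δ`.
-/

open MeasureTheory intervalIntegral

theorem MeasureTheory.Measure.pi_apply_eq_lintegral_insertNth {n : ℕ} {α : Fin (n + 1) → Type*}
    [∀ i, MeasurableSpace (α i)] (μ : ∀ i, Measure (α i)) [∀ i, SigmaFinite (μ i)]
    (p : Fin (n + 1)) {s : Set (∀ i, α i)} (hs : MeasurableSet s) :
    Measure.pi μ s = ∫⁻ t, Measure.pi (fun j => μ (p.succAbove j))
      {y | Fin.insertNth p t y ∈ s} ∂μ p := by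
  have e := (measurePreserving_piFinSuccAbove μ p).symm
  rw [← e.measure_preimage hs.nullMeasurableSet, Measure.prod_apply (hs.preimage e.measurable)]
  rfl

theorem integral_min_add_one_mul_pow (m : ℕ) {δ : ℝ} (hδ0 : 0 ≤ δ) (hδ1 : δ ≤ 1) :
    ∫ t in (0 : ℝ)..1, min (t + δ) 1 * t ^ m
      = (1 - (1 - δ) ^ (m + 2) / (m + 2)) / (m + 1) := by
  have hcont : Continuous fun t : ℝ => min (t + δ) 1 * t ^ m := by fun_prop
  have below : ∫ t in (0 : ℝ)..1 - δ, min (t + δ) 1 * t ^ m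
      = ∫ t in (0 : ℝ)..1 - δ, (t ^ (m + 1) + δ * t ^ m) := by
    refine integral_congr fun t ht => ?_
    rw [Set.uIcc_of_le (by linarith)] at ht
    simp only [min_eq_left (by linarith [ht.2] : t + δ ≤ 1)]
    ring
  have above : ∫ t in 1 - δ..1, min (t + δ) 1 * t ^ m = ∫ t in 1 - δ..1, t ^ m := by
    refine integral_congr fun t ht => ?_
    rw [Set.uIcc_of_le (by linarith)] at ht
    simp only [min_eq_right (by linarith [ht.1] : 1 ≤ t + δ), one_mul]
  rw [← integral_add_adjacent_intervals (hcont.intervalIntegrable 0 (1 - δ))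
    (hcont.intervalIntegrable _ 1), below, above,
    integral_add (intervalIntegrable_pow _) ((intervalIntegrable_pow _).const_mul δ),
    intervalIntegral.integral_const_mul, integral_pow, integral_pow, integral_pow]
  push_cast
  field_simp
  ring

/-- The region `R̂^{k1,k2}(δ)`. -/
def regionHat {K : ℕ} (δ : ℝ) (k1 k2 : Fin K) : Set (Fin K → ℝ) :=
  {x | (∀ i, x i ∈ Set.Icc (0:ℝ) 1) ∧ x k2 - δ ≤ x k1 ∧
    ∀ k, k ≠ k1 → k ≠ k2 → x k ≤ x k1}

theorem measurableSet_regionHat {K : ℕ} (δ : ℝ) (k1 k2 : Fin K) :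
    MeasurableSet (regionHat δ k1 k2) := by
  unfold regionHat
  measurability

theorem insertNth_mem_regionHat_iff {n : ℕ} (δ : ℝ) (k1 : Fin (n + 1)) (j : Fin n) (t : ℝ)
    (y : Fin n → ℝ) :
    Fin.insertNth k1 t y ∈ regionHat δ k1 (k1.succAbove j) ↔
      t ∈ Set.Icc 0 1 ∧
        y ∈ Set.univ.pi fun i => Set.Icc 0 (if i = j then min (t + δ) 1 else t) := by
  simp only [regionHat, Set.mem_ofPred_eq, Fin.forall_iff_succAbove k1, Fin.insertNth_apply_same,
    Fin.insertNth_apply_succAbove, ne_eq, not_true_eq_false, Fin.succAbove_ne, not_false_eq_true,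
    Fin.succAbove_right_inj, Set.mem_pi, Set.mem_univ, true_implies, Set.mem_Icc, false_implies,
    true_and]
  constructor
  · rintro ⟨⟨ht, hy⟩, hj, hle⟩
    refine ⟨ht, fun i => ?_⟩
    split_ifs with hi
    · subst hi; exact ⟨(hy i).1, le_min (by linarith) (hy i).2⟩
    · exact ⟨(hy i).1, hle i hi⟩
  · rintro ⟨ht, hy⟩
    refine ⟨⟨ht, fun i => ⟨(hy i).1, ?_⟩⟩, ?_, fun i hi => ?_⟩
    · exact (hy i).2.trans (by split_ifs <;> [exact min_le_right _ _; exact ht.2])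
    · have := (hy j).2
      rw [if_pos rfl] at this
      linarith [min_le_left (t + δ) 1]
    · simpa [hi] using (hy i).2

theorem volume_insertNth_mem_regionHat {m : ℕ} {δ : ℝ} (hδ : 0 ≤ δ) (k1 : Fin (m + 2))
    (j : Fin (m + 1)) (t : ℝ) :
    volume {y : Fin (m + 1) → ℝ | Fin.insertNth k1 t y ∈ regionHat δ k1 (k1.succAbove j)} =
      (Set.Icc 0 1).indicator (fun t => ENNReal.ofReal (min (t + δ) 1 * t ^ m)) t := by
  simp_rw [insertNth_mem_regionHat_iff]
  by_cases ht : t ∈ Set.Icc 0 1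
  · simp only [ht, true_and, Set.ofPred_mem_eq, Set.indicator_of_mem, volume_pi_pi,
      Real.volume_Icc, sub_zero, Fin.prod_univ_succAbove _ j, if_pos, Fin.succAbove_ne, if_false]
    rw [Finset.prod_const, Finset.card_univ, Fintype.card_fin, ← ENNReal.ofReal_pow ht.1,
      ← ENNReal.ofReal_mul (le_min (by linarith [ht.1]) zero_le_one)]
  · simp [ht]

theorem volume_regionHat_eq_setLIntegral {m : ℕ} {δ : ℝ} (hδ : 0 ≤ δ) (k1 : Fin (m + 2))
    (j : Fin (m + 1)) :
    volume (regionHat δ k1 (k1.succAbove j)) =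
      ∫⁻ t in Set.Icc 0 1, ENNReal.ofReal (min (t + δ) 1 * t ^ m) := by
  rw [← lintegral_indicator measurableSet_Icc]
  simp_rw [← volume_insertNth_mem_regionHat hδ k1 j]
  exact Measure.pi_apply_eq_lintegral_insertNth _ k1 (measurableSet_regionHat δ k1 _)

/-- The volume of `R̂^{k1,k2}(δ) = {x ∈ [0,1]^K : x^{k1} ≥ x^{k2} − δ, x^{k1} ≥ x^k ∀ k ∉ {k1,k2}}`
equals `(1/(K−1))·(1 − (1−δ)^K/K)`. -/
theorem stmt1 (K : ℕ) (hK : 2 ≤ K) (δ : ℝ) (hδ0 : 0 ≤ δ) (hδ1 : δ ≤ 1)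
    (k1 k2 : Fin K) (hk : k1 ≠ k2) :
    volume {x : Fin K → ℝ | (∀ i, x i ∈ Set.Icc (0:ℝ) 1) ∧ x k2 - δ ≤ x k1 ∧
      ∀ k, k ≠ k1 → k ≠ k2 → x k ≤ x k1}
      = ENNReal.ofReal ((1 / ((K : ℝ) - 1)) * (1 - (1 - δ) ^ K / K)) := by
  obtain ⟨m, rfl⟩ : ∃ m, K = m + 2 := ⟨K - 2, by omega⟩
  obtain ⟨j, rfl⟩ := Fin.exists_succAbove_eq hk.symm
  change volume (regionHat δ k1 (k1.succAbove j)) = _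
  have hf : ∀ t ∈ Set.Icc (0 : ℝ) 1, 0 ≤ min (t + δ) 1 * t ^ m := fun t ht =>
    mul_nonneg (le_min (by linarith [ht.1]) zero_le_one) (pow_nonneg ht.1 _)
  rw [volume_regionHat_eq_setLIntegral hδ0, ← ofReal_integral_eq_lintegral_ofReal
      (Continuous.integrableOn_Icc (by fun_prop))
      ((ae_restrict_iff' measurableSet_Icc).2 (.of_forall hf)),
    integral_Icc_eq_integral_Ioc, ← integral_of_le zero_le_one,
    integral_min_add_one_mul_pow m hδ0 hδ1]
  congr 1
  push_cast
  rw [add_sub_assoc, one_div_mul_eq_div]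
  norm_num
end

section
/- Let K ≥ 2, δ ∈ [0,1], and v = (1/(K−1))·(1 − (1−δ)^K/K). Then v ≥ 1/K + δ/(K−1) − δ²/2, and if additionally δ ≤ 2/(K(K−1)), then v ≥ (1+δ)/K. -/
/-!
Write `v = (K - (1 - δ)^K) / (K (K - 1))`. Truncating the binomial expansion of `(1 - δ)^K`
after the quadratic term gives an upper bound, which yields the first inequality. Its
right-hand side exceeds `(1 + δ)/K` by `δ/(K(K-1)) - δ²/2`, which is nonnegative exactly when
`δ ≤ 2/(K(K-1))`.
-/

theorem one_sub_pow_le_quadratic (n : ℕ) {δ : ℝ} (hδ0 : 0 ≤ δ) (hδ1 : δ ≤ 1) :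
    (1 - δ) ^ n ≤ 1 - n * δ + n * ((n : ℝ) - 1) / 2 * δ ^ 2 := by
  induction n with
  | zero => simp
  | succ n ih =>
    have hn : 0 ≤ (n : ℝ) * ((n : ℝ) - 1) := by
      rcases Nat.eq_zero_or_pos n with rfl | hpos
      · simp
      · have : (1 : ℝ) ≤ n := by exact_mod_cast hpos
        nlinarith
    calc (1 - δ) ^ (n + 1) = (1 - δ) * (1 - δ) ^ n := pow_succ' _ _
      _ ≤ (1 - δ) * (1 - n * δ + n * ((n : ℝ) - 1) / 2 * δ ^ 2) :=
          mul_le_mul_of_nonneg_left ih (by linarith)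
      _ ≤ 1 - ↑(n + 1) * δ + ↑(n + 1) * (↑(n + 1) - 1) / 2 * δ ^ 2 := by
          push_cast
          nlinarith [mul_nonneg hn (pow_nonneg hδ0 3)]

/-- Bounds on `v = (1/(K−1))·(1 − (1−δ)^K/K)`. -/
theorem stmt2 (K : ℕ) (hK : 2 ≤ K) (δ : ℝ) (hδ0 : 0 ≤ δ) (hδ1 : δ ≤ 1) :
    (1 / ((K : ℝ) - 1)) * (1 - (1 - δ) ^ K / K) ≥ 1 / K + δ / ((K : ℝ) - 1) - δ ^ 2 / 2 ∧
    (δ ≤ 2 / ((K : ℝ) * ((K : ℝ) - 1)) →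
      (1 / ((K : ℝ) - 1)) * (1 - (1 - δ) ^ K / K) ≥ (1 + δ) / K) := by
  have hK1 : (0 : ℝ) < (K : ℝ) - 1 := by
    have : (2 : ℝ) ≤ K := by exact_mod_cast hK
    linarith
  have hK0 : (0 : ℝ) < K := by linarith
  have hv : (1 / ((K : ℝ) - 1)) * (1 - (1 - δ) ^ K / K)
      = 1 / K + δ / ((K : ℝ) - 1) - δ ^ 2 / 2
        + (1 - K * δ + K * ((K : ℝ) - 1) / 2 * δ ^ 2 - (1 - δ) ^ K) / (K * ((K : ℝ) - 1)) := by
    field_simp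
    ring
  have first : (1 / ((K : ℝ) - 1)) * (1 - (1 - δ) ^ K / K)
      ≥ 1 / K + δ / ((K : ℝ) - 1) - δ ^ 2 / 2 := by
    rw [hv, ge_iff_le, le_add_iff_nonneg_right]
    exact div_nonneg (sub_nonneg.2 (one_sub_pow_le_quadratic K hδ0 hδ1)) (by positivity)
  refine ⟨first, fun hδ => le_trans ?_ first⟩
  have hδK : δ * ((K : ℝ) * ((K : ℝ) - 1)) ≤ 2 := (le_div_iff₀ (by positivity)).1 hδ
  have hgap : 1 / (K : ℝ) + δ / ((K : ℝ) - 1) - δ ^ 2 / 2 - (1 + δ) / K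
      = δ * (2 - δ * (K * ((K : ℝ) - 1))) / (2 * (K * ((K : ℝ) - 1))) := by
    field_simp
    ring
  have : 0 ≤ δ * (2 - δ * (K * ((K : ℝ) - 1))) / (2 * (K * ((K : ℝ) - 1))) :=
    div_nonneg (mul_nonneg hδ0 (by linarith)) (by positivity)
  linarith
end

section
/- Let n points be drawn i.i.d. uniformly from [0,1], and let V denote the maximum difference between consecutive values in the set of drawn points together with {0, 1}. Then with probability at least 1 − 1/n (for n sufficiently large), V ≤ 6 log n / n. -/
/-!
Cut `[0,1]` into the `⌊1/h⌋` cells `[k h, k h + h]`, `h = 3 log n / n`. An interval `(a,b) ⊆ [0,1]`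
longer than `2 h` contains a whole cell, so it contains a point unless some cell is empty. A
fixed cell is empty with probability `(1 - h)^n ≤ exp (-h n) = n⁻³`, and there are at most `n`
cells, so by the union bound the gap exceeds `2 h` with probability at most `n⁻² ≤ 1/n`.
-/

open MeasureTheory Set Real

lemma three_mul_log_le_self {x : ℝ} (hx : 36 ≤ x) : 3 * log x ≤ x := by
  have hx0 : 0 < x := by linarith
  have hsqrt : 6 ≤ √x := Real.le_sqrt_of_sq_le (by linarith)
  have hlog : log √x ≤ √x - 1 := log_le_sub_one_of_pos (by positivity)
  rw [← Real.mul_self_sqrt hx0.le, log_mul (by positivity) (by positivity)]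
  nlinarith

lemma floor_inv_mul_one_sub_pow_le {n : ℕ} (hn : 36 ≤ n) :
    (⌊1 / (3 * log n / n)⌋₊ : ℝ) * (1 - 3 * log n / n) ^ n ≤ 1 / n := by
  have hn' : (36 : ℝ) ≤ n := by exact_mod_cast hn
  have hn0 : (0 : ℝ) < n := by linarith
  have hlog : 1 ≤ log n := by
    rw [le_log_iff_exp_le hn0]
    linarith [exp_one_lt_d9]
  have hsmall : 3 * log n ≤ n := three_mul_log_le_self hn'
  have hcount : (⌊1 / (3 * log n / n)⌋₊ : ℝ) ≤ n :=
    calc (⌊1 / (3 * log n / n)⌋₊ : ℝ) ≤ 1 / (3 * log n / n) := Nat.floor_le (by positivity)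
      _ = n / (3 * log n) := one_div_div _ _
      _ ≤ n := div_le_self hn0.le (by linarith)
  have hempty : (1 - 3 * log n / n) ^ n ≤ 1 / (n : ℝ) ^ 3 :=
    calc (1 - 3 * log n / n) ^ n ≤ exp (-(3 * log n)) := one_sub_div_pow_le_exp_neg hsmall
      _ = 1 / (n : ℝ) ^ 3 := by
        rw [exp_neg, one_div, ← exp_log (pow_pos hn0 3), log_pow]
        norm_num
  calc (⌊1 / (3 * log n / n)⌋₊ : ℝ) * (1 - 3 * log n / n) ^ n ≤ n * (1 / (n : ℝ) ^ 3) :=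
        mul_le_mul hcount hempty
          (pow_nonneg (sub_nonneg.2 ((div_le_one hn0).2 hsmall)) _) hn0.le
    _ ≤ 1 / n := by
      rw [mul_one_div, div_le_div_iff₀ (by positivity) hn0]
      nlinarith

lemma exists_Icc_subset_Ioo_of_two_mul_lt {h a b : ℝ} (hh : 0 < h) (ha : 0 ≤ a) (hb : b ≤ 1)
    (hab : 2 * h < b - a) : ∃ k < ⌊1 / h⌋₊, Icc (k * h) (k * h + h) ⊆ Ioo a b := by
  set k := ⌊a / h⌋₊ + 1
  have hk : (k : ℝ) = ⌊a / h⌋₊ + 1 := by push_cast [k]; rfl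
  have hlt : a < k * h := by
    rw [hk, ← div_lt_iff₀ hh]; exact Nat.lt_floor_add_one _
  have hle : k * h ≤ a + h := by
    rw [hk, add_mul, one_mul, add_le_add_iff_right, ← le_div_iff₀ hh]
    exact Nat.floor_le (by positivity)
  refine ⟨k, ?_, Icc_subset_Ioo hlt (by linarith)⟩
  rw [← Nat.add_one_le_iff, Nat.le_floor_iff (by positivity), le_div_iff₀ hh]
  push_cast
  linarith

def missesSomeCell (ι : Type*) (h : ℝ) : Set (ι → ℝ) :=
  ⋃ k ∈ Finset.range ⌊1 / h⌋₊, univ.pi fun _ => Icc 0 1 \ Icc (k * h) (k * h + h)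

section Cells

variable {ι : Type*} {h : ℝ}

lemma volume_pi_Icc_diff_Icc [Fintype ι] {c : ℝ} (hc : 0 ≤ c) (hh : 0 ≤ h) (hch : c + h ≤ 1) :
    volume (univ.pi fun _ : ι => Icc (0 : ℝ) 1 \ Icc c (c + h)) =
      ENNReal.ofReal ((1 - h) ^ Fintype.card ι) := by
  have hcell : volume (Icc (0 : ℝ) 1 \ Icc c (c + h)) = ENNReal.ofReal (1 - h) := by
    rw [measure_sdiff (Icc_subset_Icc hc hch) measurableSet_Icc.nullMeasurableSet
      measure_Icc_lt_top.ne, Real.volume_Icc, Real.volume_Icc, add_sub_cancel_left,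
      ← ENNReal.ofReal_sub _ hh, sub_zero]
  rw [volume_pi_pi, hcell, Finset.prod_const, Finset.card_univ,
    ENNReal.ofReal_pow (sub_nonneg.2 (by linarith))]

lemma volume_missesSomeCell_le [Fintype ι] (hh : 0 < h) :
    volume (missesSomeCell ι h) ≤ ⌊1 / h⌋₊ * ENNReal.ofReal ((1 - h) ^ Fintype.card ι) := by
  refine (measure_biUnion_finset_le _ _).trans ?_
  refine (Finset.sum_le_card_nsmul _ _ _ fun k hk => (volume_pi_Icc_diff_Icc (by positivity)
    hh.le ?_).le).trans_eq (by rw [Finset.card_range, nsmul_eq_mul])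
  have : (k : ℝ) + 1 ≤ 1 / h := by
    exact_mod_cast (Nat.le_floor_iff (by positivity)).1 (Finset.mem_range.1 hk)
  rw [le_div_iff₀ hh] at this
  linarith

lemma exists_mem_Ioo_of_notMem_missesSomeCell (hh : 0 < h) {x : ι → ℝ}
    (hx01 : x ∈ univ.pi fun _ => Icc 0 1) (hx : x ∉ missesSomeCell ι h) {a b : ℝ} (ha : 0 ≤ a)
    (hb : b ≤ 1) (hab : 2 * h < b - a) : ∃ i, x i ∈ Ioo a b := by
  obtain ⟨k, hk, hsub⟩ := exists_Icc_subset_Ioo_of_two_mul_lt hh ha hb hab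
  simp only [missesSomeCell, mem_iUnion, Finset.mem_range, not_exists] at hx
  obtain ⟨i, -, hi⟩ := not_forall₂.1 (hx k hk)
  exact ⟨i, hsub (not_not.1 fun h' => hi ⟨hx01 i trivial, h'⟩)⟩

end Cells

/-- Maximum spacing of `n` i.i.d. uniform points on `[0,1]`: with probability at least
`1 − 1/n` (for `n` large), the largest gap between consecutive values of the points
together with `{0,1}` is at most `6 log n / n`.  The gap bound `V ≤ g` is expressed
equivalently: every subinterval `(a,b) ⊆ [0,1]` of length `> g` contains one of the
points or an endpoint `0`, `1`. -/
theorem stmt10 :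
    ∃ N : ℕ, ∀ n : ℕ, N ≤ n →
      ENNReal.ofReal (1 - 1 / (n : ℝ)) ≤
      volume {x : Fin n → ℝ | (∀ i, x i ∈ Set.Icc (0:ℝ) 1) ∧
        ∀ a b : ℝ, 0 ≤ a → b ≤ 1 → 6 * Real.log n / n < b - a →
          ∃ s : ℝ, (s = 0 ∨ s = 1 ∨ ∃ i, s = x i) ∧ a < s ∧ s < b} := by
  refine ⟨36, fun n hn => ?_⟩
  have hn1 : (1 : ℝ) < n := by exact_mod_cast (by omega : 1 < n)
  set h := 3 * log n / n
  have hh : 0 < h := by have := log_pos hn1; positivity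
  set C : Set (Fin n → ℝ) := univ.pi fun _ => Icc 0 1
  have hbad : volume (missesSomeCell (Fin n) h) ≤ ENNReal.ofReal (1 / n) := by
    refine (volume_missesSomeCell_le hh).trans ?_
    rw [← ENNReal.ofReal_natCast, ← ENNReal.ofReal_mul (by positivity), Fintype.card_fin]
    exact ENNReal.ofReal_le_ofReal (floor_inv_mul_one_sub_pow_le hn)
  calc ENNReal.ofReal (1 - 1 / n) = volume C - ENNReal.ofReal (1 / n) := by
        rw [ENNReal.ofReal_sub _ (by positivity), volume_pi_pi]; simp
    _ ≤ volume C - volume (missesSomeCell (Fin n) h) := tsub_le_tsub_left hbad _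
    _ ≤ volume (C \ missesSomeCell (Fin n) h) := le_measure_sdiff
    _ ≤ _ := measure_mono ?_
  rintro x ⟨hx01, hx⟩
  refine ⟨fun i => hx01 i trivial, fun a b ha hb hab => ?_⟩
  obtain ⟨i, hi⟩ := exists_mem_Ioo_of_notMem_missesSomeCell hh hx01 hx ha hb
    (by convert hab using 1; ring)
  exact ⟨x i, .inr (.inr ⟨i, rfl⟩), hi⟩
end

section
/- Consider a bipartite graph on worker types T_L and employer types T_E induced by a matching M of agents (with n_t agents of each type t): there is an edge between types k ∈ T_L and q ∈ T_E iff some agent of type k is matched to some agent of type q. Mark a type-vertex iff at least one agent of that type is unmatched under M. If for every pair of subsets S ⊆ T_L, S' ⊆ T_E one has Σ_{t∈S} n_t ≠ Σ_{t∈S'} n_t, then every connected component of this type-adjacency graph contains a marked vertex. -/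
/-- The type-adjacency relation induced by a matching `M`: worker type `k` and employer
type `q` are adjacent iff some worker of type `k` is matched to some employer of type `q`. -/
def adjType {W E TL TE : Type*} (τw : W → TL) (τe : E → TE) (M : W → Option E) :
    (TL ⊕ TE) → (TL ⊕ TE) → Prop
  | Sum.inl k, Sum.inr q => ∃ w e, τw w = k ∧ τe e = q ∧ M w = some e
  | Sum.inr q, Sum.inl k => ∃ w e, τw w = k ∧ τe e = q ∧ M w = some e
  | _, _ => False

/-- A type is marked iff some agent of that type is unmatched under `M`. -/
def markedType {W E TL TE : Type*} (τw : W → TL) (τe : E → TE) (M : W → Option E) :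
    (TL ⊕ TE) → Prop
  | Sum.inl k => ∃ w, τw w = k ∧ M w = none
  | Sum.inr q => ∃ e, τe e = q ∧ ∀ w, M w ≠ some e


/-! Let `C` be the component of `v`. If `C` had no marked vertex, every worker whose type lies
in `C` would be matched to an employer whose type lies in `C` and vice versa, so the matching
would be a bijection between the agents of the worker types and of the employer types of `C`:
the submarket `C` would be balanced. -/

open Finset

theorem Finset.sum_card_filter_eq_card_filter_mem {ι M : Type*} [Fintype ι] [DecidableEq M]
    (f : ι → M) (t : Finset M) : ∑ b ∈ t, #{a | f a = b} = #{a | f a ∈ t} := by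
  simp only [card_eq_sum_ones, sum_filter]
  rw [sum_comm]
  simp

theorem Finset.card_eq_card_of_matches {W E : Type*} {M : W → Option E}
    (hinj : ∀ w w' e, M w = some e → M w' = some e → w = w') {A : Finset W} {B : Finset E}
    (hA : ∀ w ∈ A, ∃ e ∈ B, M w = some e) (hB : ∀ e ∈ B, ∃ w ∈ A, M w = some e) :
    #A = #B := by
  refine card_bij (fun w hw => (hA w hw).choose) (fun w hw => (hA w hw).choose_spec.1)
    (fun w hw w' hw' h => hinj w w' _ (hA w hw).choose_spec.2 (h ▸ (hA w' hw').choose_spec.2)) ?_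
  intro e he
  obtain ⟨w, hw, hwe⟩ := hB e he
  exact ⟨w, hw, Option.some.inj ((hA w hw).choose_spec.2.symm.trans hwe)⟩

section TypeGraph

variable {W E TL TE : Type*} (τw : W → TL) (τe : E → TE) (M : W → Option E)

theorem adjType_inl_inr_of_match {w : W} {e : E} (h : M w = some e) :
    adjType τw τe M (Sum.inl (τw w)) (Sum.inr (τe e)) :=
  ⟨w, e, rfl, rfl, h⟩

theorem adjType_inr_inl_of_match {w : W} {e : E} (h : M w = some e) :
    adjType τw τe M (Sum.inr (τe e)) (Sum.inl (τw w)) :=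
  ⟨w, e, rfl, rfl, h⟩

variable [Fintype W] [Fintype E]

open Classical in
theorem card_workers_eq_card_employers_of_component_unmarked
    (hinj : ∀ w w' e, M w = some e → M w' = some e → w = w') (v : TL ⊕ TE)
    (hunmarked : ∀ u, Relation.ReflTransGen (adjType τw τe M) v u → ¬ markedType τw τe M u) :
    #{w | Relation.ReflTransGen (adjType τw τe M) v (Sum.inl (τw w))} =
      #{e | Relation.ReflTransGen (adjType τw τe M) v (Sum.inr (τe e))} := by
  refine card_eq_card_of_matches hinj (fun w hw => ?_) (fun e he => ?_)
  · rw [mem_filter] at hw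
    cases hMw : M w with
    | none => exact (hunmarked _ hw.2 ⟨w, rfl, hMw⟩).elim
    | some e =>
      exact ⟨e, mem_filter.mpr ⟨mem_univ e, hw.2.tail (adjType_inl_inr_of_match τw τe M hMw)⟩, rfl⟩
  · rw [mem_filter] at he
    by_cases hmatched : ∃ w, M w = some e
    · obtain ⟨w, hMw⟩ := hmatched
      exact ⟨w, mem_filter.mpr ⟨mem_univ w, he.2.tail (adjType_inr_inl_of_match τw τe M hMw)⟩,
        hMw⟩
    · exact (hunmarked _ he.2 ⟨e, rfl, not_exists.mp hmatched⟩).elim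

end TypeGraph

/-- If no (nonempty) submarket of types is balanced, then every connected component of
the type-adjacency graph of a matching contains a marked vertex. -/
theorem stmt12 {W E TL TE : Type*} [Fintype W] [Fintype E] [Fintype TL] [Fintype TE]
    [DecidableEq TL] [DecidableEq TE]
    (τw : W → TL) (τe : E → TE) (M : W → Option E)
    (hinj : ∀ w w' e, M w = some e → M w' = some e → w = w')
    (hbal : ∀ (S : Finset TL) (S' : Finset TE), S.Nonempty ∨ S'.Nonempty →
      ∑ t ∈ S, (Finset.univ.filter fun w => τw w = t).card ≠
        ∑ t ∈ S', (Finset.univ.filter fun e => τe e = t).card) :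
    ∀ v : TL ⊕ TE, ∃ u : TL ⊕ TE, markedType τw τe M u ∧
      Relation.ReflTransGen (adjType τw τe M) v u := by
  classical
  intro v
  by_contra! hunmarked
  let S : Finset TL := {k | Relation.ReflTransGen (adjType τw τe M) v (Sum.inl k)}
  let S' : Finset TE := {q | Relation.ReflTransGen (adjType τw τe M) v (Sum.inr q)}
  have hne : S.Nonempty ∨ S'.Nonempty := by
    cases v with
    | inl k => exact Or.inl ⟨k, mem_filter.mpr ⟨mem_univ k, .refl⟩⟩
    | inr q => exact Or.inr ⟨q, mem_filter.mpr ⟨mem_univ q, .refl⟩⟩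
  refine hbal S S' hne ?_
  rw [sum_card_filter_eq_card_filter_mem, sum_card_filter_eq_card_filter_mem]
  simpa [S, S'] using card_workers_eq_card_employers_of_component_unmarked τw τe M hinj v
    fun u hu hm => hunmarked u hm hu
end

section
/- In a transferable-utility assignment market where the match value satisfies Φ(i,j) = u(τ(i),τ(j)) + ε_j^{τ(i)} + η_i^{τ(j)}, let (M, γ) be a stable outcome (γ_i + γ_j = Φ(i,j) for matched pairs, γ_i + γ_j ≥ Φ(i,j) for all pairs, γ ≥ 0). Then for any two matched pairs (i,j) and (i',j') with τ(i) = τ(i') = k and τ(j) = τ(j') = q, one has γ_i − (u(k,q) + η_i^q) = γ_{i'} − (u(k,q) + η_{i'}^q). Consequently there exists a vector α ∈ ℝ^{K×Q} such that γ_i = u(k,q) + η_i^q − α_{kq} and γ_j = ε_j^k + α_{kq} for every matched pair (i,j) of types (k,q). -/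
/-- Structure of core payoffs under separable match values: in any stable outcome, the
quantity `γ_i − (u(k,q) + η_i^q)` is the same for all matched pairs of types `(k,q)`, and
consequently there is a vector `α` of type-pair prices such that
`γ_i = u(k,q) + η_i^q − α_{kq}` and `γ_j = ε_j^k + α_{kq}` for each matched pair. -/
theorem stmt13 {W E : Type*} (K Q : ℕ) (τw : W → Fin K) (τe : E → Fin Q)
    (u : Fin K → Fin Q → ℝ) (ε : E → Fin K → ℝ) (η : W → Fin Q → ℝ)
    (Φ : W → E → ℝ) (hΦ : ∀ i j, Φ i j = u (τw i) (τe j) + ε j (τw i) + η i (τe j))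
    (M : Set (W × E)) (γw : W → ℝ) (γe : E → ℝ)
    (hnnw : ∀ i, 0 ≤ γw i) (hnne : ∀ j, 0 ≤ γe j)
    (hsplit : ∀ p ∈ M, γw p.1 + γe p.2 = Φ p.1 p.2)
    (hstab : ∀ i j, Φ i j ≤ γw i + γe j) :
    (∀ i j i' j', (i, j) ∈ M → (i', j') ∈ M → τw i = τw i' → τe j = τe j' →
      γw i - (u (τw i) (τe j) + η i (τe j)) = γw i' - (u (τw i') (τe j') + η i' (τe j'))) ∧
    ∃ α : Fin K → Fin Q → ℝ, ∀ i j, (i, j) ∈ M →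
      γw i = u (τw i) (τe j) + η i (τe j) - α (τw i) (τe j) ∧
      γe j = ε j (τw i) + α (τw i) (τe j) := by
  classical
  -- key: for matched pairs of same types, γe j - ε j k is constant
  have key : ∀ i j i' j', (i, j) ∈ M → (i', j') ∈ M → τw i = τw i' → τe j = τe j' →
      γe j - ε j (τw i) = γe j' - ε j' (τw i) := by
    intro i j i' j' hm hm' hk hq
    have s1 := hsplit _ hm
    have s2 := hsplit _ hm'
    have t1 := hstab i j'
    have t2 := hstab i' j
    simp only [hΦ] at s1 s2 t1 t2
    rw [hk, hq] at *
    linarith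
  have keyw : ∀ i j i' j', (i, j) ∈ M → (i', j') ∈ M → τw i = τw i' → τe j = τe j' →
      γw i - (u (τw i) (τe j) + η i (τe j)) = γw i' - (u (τw i') (τe j') + η i' (τe j')) := by
    intro i j i' j' hm hm' hk hq
    have s1 := hsplit _ hm
    have s2 := hsplit _ hm'
    have h := key i j i' j' hm hm' hk hq
    simp only [hΦ] at s1 s2
    rw [hk, hq] at *
    linarith
  refine ⟨keyw, ?_⟩
  refine ⟨fun k q => if h : ∃ p : W × E, p ∈ M ∧ τw p.1 = k ∧ τe p.2 = q then
      γe h.choose.2 - ε h.choose.2 k else 0, ?_⟩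
  intro i j hm
  have hex : ∃ p : W × E, p ∈ M ∧ τw p.1 = (τw i) ∧ τe p.2 = (τe j) := ⟨(i, j), hm, rfl, rfl⟩
  obtain ⟨hmem, hk, hq⟩ := hex.choose_spec
  have h1 : γe j - ε j (τw i) = γe hex.choose.2 - ε hex.choose.2 (τw i) := by
    have := key i j hex.choose.1 hex.choose.2 hm (by simpa using hmem) hk.symm hq.symm
    simpa using this
  have s1 := hsplit _ hm
  simp only [hΦ] at s1
  simp only [dif_pos hex]
  constructor
  · linarith
  · linarith
end

section
/- Let n points be drawn i.i.d. uniformly from [0,1]^K with K ≥ 1 fixed, let δ ∈ (0,1], fix k ∈ {1,…,K}, and let R̃^k(δ) = {x ∈ [0,1]^K : x^{k'} ≤ δ for all k' ≠ k}. Let Ṽ^k(δ) be the maximum difference between consecutive values in {x^k : x ∈ R̃^k(δ) among the drawn points} ∪ {0,1}. Then there is a function f(n) = O(log n / n) such that with probability at least 1 − 1/n (for n large enough), Ṽ^k(δ) ≤ f(n)/δ^{K−1}. -/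
/-!
Cut `[0, 1]` into `m ≈ 2 / G` cells of width `1 / m`, where `G = 6 log n / (n δ^(K-1))`.
An interval of length `> G ≥ 2 / m` contains a whole cell, so it suffices that every cell
contains the `k`-th coordinate of some sample point of `R̃^k(δ)`. A sample point falls into the
box over a fixed cell with probability `p = δ^(K-1) / m ≥ 2 log n / n`, so the cell is missed with
probability `(1 - p)^n ≤ exp (-n p) ≤ 1 / n^2`, and a union bound over the `m ≤ n` cells leaves
failure probability at most `1 / n`. When `G ≥ 1` there is no interval to fill.
-/

open MeasureTheory Set Real Function
open scoped ENNReal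

lemma ofReal_one_sub_le_measure {Ω : Type*} [MeasurableSpace Ω] {μ : Measure Ω} {s t : Set Ω}
    {ε : ℝ} (hs : μ s = 1) (hε : 0 ≤ ε) (h : μ (s \ t) ≤ ENNReal.ofReal ε) :
    ENNReal.ofReal (1 - ε) ≤ μ t := by
  rw [ENNReal.ofReal_sub _ hε, ENNReal.ofReal_one, tsub_le_iff_right, ← hs]
  calc μ s ≤ μ (s ∩ t) + μ (s \ t) := measure_le_inter_add_sdiff μ s t
    _ ≤ μ t + ENNReal.ofReal ε := add_le_add (measure_mono inter_subset_right) h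

lemma volume_setOf_forall_mem {α ι : Type*} [Fintype ι] [MeasureSpace α]
    [SigmaFinite (volume : Measure α)] (D : Set α) :
    volume {x : ι → α | ∀ i, x i ∈ D} = volume D ^ Fintype.card ι := by
  rw [show {x : ι → α | ∀ i, x i ∈ D} = univ.pi fun _ => D by ext; simp, volume_pi_pi]
  simp

lemma one_sub_pow_le_inv_sq {n : ℕ} (hn : 0 < n) {p : ℝ} (hp : p ≤ 1)
    (hlog : 2 * log n ≤ n * p) : (1 - p) ^ n ≤ 1 / (n : ℝ) ^ 2 := by
  have hn0 : (0 : ℝ) < n := by exact_mod_cast hn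
  calc (1 - p) ^ n = (1 - n * p / n) ^ n := by rw [mul_div_cancel_left₀ _ hn0.ne']
    _ ≤ exp (-(n * p)) := one_sub_div_pow_le_exp_neg (mul_le_of_le_one_right hn0.le hp)
    _ ≤ exp (-log ((n : ℝ) ^ 2)) :=
        exp_le_exp.2 (by rw [Real.log_pow]; push_cast; linarith)
    _ = 1 / (n : ℝ) ^ 2 := by rw [exp_neg, exp_log (by positivity), one_div]

lemma pow_div_natCast_le_one {δ : ℝ} (hδ0 : 0 ≤ δ) (hδ1 : δ ≤ 1) {m : ℕ} (hm : 0 < m) (d : ℕ) :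
    δ ^ d / m ≤ 1 :=
  div_le_one_of_le₀ ((pow_le_one₀ hδ0 hδ1).trans (by exact_mod_cast hm)) (Nat.cast_nonneg m)

lemma exists_mem_Ioo_of_forall_exists_mem_Icc {T : Set ℝ} {m : ℕ} (hm : 0 < m)
    (hT : ∀ j < m, ∃ s ∈ T, s ∈ Icc ((j : ℝ) / m) ((j + 1) / m)) {a b : ℝ} (ha : 0 ≤ a)
    (hb : b ≤ 1) (hab : 2 / m < b - a) : ∃ s ∈ T, a < s ∧ s < b := by
  have hm0 : (0 : ℝ) < m := by exact_mod_cast hm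
  -- the cell right after the one containing `a` lies inside `(a, b)`
  set j := ⌊a * m⌋₊ + 1
  have hj_gt : a * m < j := by
    simpa [j] using Nat.lt_floor_add_one (a * m)
  have hj_le : (j : ℝ) ≤ a * m + 1 := by
    simpa [j] using Nat.floor_le (by positivity : 0 ≤ a * m)
  have hjb : ((j : ℝ) + 1) / m < b := by
    rw [div_lt_iff₀ hm0]
    rw [div_lt_iff₀ hm0] at hab
    nlinarith
  have hjm : j < m := by
    have : ((j : ℝ) + 1) / m < 1 := hjb.trans_le hb
    rw [div_lt_one hm0] at this
    exact_mod_cast (by linarith : (j : ℝ) < m)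
  obtain ⟨s, hsT, hs⟩ := hT j hjm
  exact ⟨s, hsT, lt_of_lt_of_le ((lt_div_iff₀ hm0).2 hj_gt) hs.1, hs.2.trans_lt hjb⟩

section Slab

variable {ι : Type*}

def unitCube (ι : Type*) : Set (ι → ℝ) := univ.pi fun _ => Icc 0 1

lemma volume_unitCube [Fintype ι] : volume (unitCube ι) = 1 := by
  rw [unitCube, volume_pi_pi]
  simp

variable [DecidableEq ι]

/-- The paper's `R̃^k(δ)` is `slabCell k δ 0 1`. -/
def slabCell (k : ι) (δ a b : ℝ) : Set (ι → ℝ) := univ.pi (update (fun _ => Icc 0 δ) k (Icc a b))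

lemma mem_slabCell {k : ι} {δ a b : ℝ} {y : ι → ℝ} :
    y ∈ slabCell k δ a b ↔ y k ∈ Icc a b ∧ ∀ k', k' ≠ k → y k' ∈ Icc 0 δ := by
  simp only [slabCell, mem_univ_pi, update_apply]
  refine ⟨fun h => ⟨by simpa using h k, fun k' hk' => by simpa [hk'] using h k'⟩, fun h k' => ?_⟩
  split_ifs with hk'
  · exact hk' ▸ h.1
  · exact h.2 k' hk'

lemma measurableSet_slabCell [Fintype ι] (k : ι) (δ a b : ℝ) :
    MeasurableSet (slabCell k δ a b) :=
  MeasurableSet.univ_pi fun k' => by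
    rw [update_apply]; split_ifs <;> exact measurableSet_Icc

lemma volume_slabCell [Fintype ι] (k : ι) (δ a b : ℝ) :
    volume (slabCell k δ a b) =
      ENNReal.ofReal (b - a) * ENNReal.ofReal δ ^ (Fintype.card ι - 1) := by
  rw [slabCell, volume_pi_pi]
  simp only [apply_update (fun _ (s : Set ℝ) => volume s)]
  rw [Finset.prod_update_of_mem (Finset.mem_univ k)]
  simp [Real.volume_Icc, Finset.card_sdiff]

lemma slabCell_subset_unitCube {k : ι} {δ a b : ℝ} (hδ : δ ≤ 1) (ha : 0 ≤ a) (hb : b ≤ 1) :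
    slabCell k δ a b ⊆ unitCube ι :=
  pi_mono fun k' _ => by
    rw [update_apply]; split_ifs
    exacts [Icc_subset_Icc ha hb, Icc_subset_Icc le_rfl hδ]

lemma volume_unitCube_diff_slabCell [Fintype ι] (k : ι) {δ a b : ℝ} (hδ0 : 0 ≤ δ) (hδ1 : δ ≤ 1)
    (ha : 0 ≤ a) (hab : a ≤ b) (hb : b ≤ 1) :
    volume (unitCube ι \ slabCell k δ a b) =
      ENNReal.ofReal (1 - (b - a) * δ ^ (Fintype.card ι - 1)) := by
  rw [measure_sdiff (slabCell_subset_unitCube hδ1 ha hb)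
      (measurableSet_slabCell k δ a b).nullMeasurableSet (by
      rw [volume_slabCell]
      exact ENNReal.mul_ne_top ENNReal.ofReal_ne_top (ENNReal.pow_ne_top ENNReal.ofReal_ne_top)),
    volume_unitCube, volume_slabCell, ← ENNReal.ofReal_pow hδ0,
    ← ENNReal.ofReal_mul (sub_nonneg.2 hab), ENNReal.ofReal_sub _ (by positivity),
    ENNReal.ofReal_one]

end Slab

section Spacing

variable {ι : Type*}

/-- The event `Ṽ^k(δ) ≤ G`. -/
def spacingEvent (n : ℕ) (k : ι) (δ G : ℝ) : Set (Fin n → ι → ℝ) :=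
  {x | (∀ i k', x i k' ∈ Icc (0 : ℝ) 1) ∧
    ∀ a b : ℝ, 0 ≤ a → b ≤ 1 → G < b - a →
      ∃ s : ℝ, (s = 0 ∨ s = 1 ∨ ∃ i, (∀ k', k' ≠ k → x i k' ≤ δ) ∧ s = x i k) ∧ a < s ∧ s < b}

lemma spacingEvent_eq_of_one_le {n : ℕ} (k : ι) (δ : ℝ) {G : ℝ} (hG : 1 ≤ G) :
    spacingEvent n k δ G = {x | ∀ i, x i ∈ unitCube ι} := by
  ext x
  simp only [spacingEvent, unitCube, mem_ofPred_eq, mem_univ_pi]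
  exact ⟨fun h => h.1, fun h => ⟨h, fun a b ha hb hab => by linarith⟩⟩

variable [DecidableEq ι]

lemma mem_spacingEvent_of_forall_exists_mem_slabCell {n m : ℕ} (hm : 0 < m) {k : ι} {δ G : ℝ}
    (hG : 2 / m ≤ G) {x : Fin n → ι → ℝ} (hx : ∀ i, x i ∈ unitCube ι)
    (hcell : ∀ j < m, ∃ i, x i ∈ slabCell k δ (j / m) ((j + 1) / m)) :
    x ∈ spacingEvent n k δ G := by
  have hT : ∀ j < m, ∃ s ∈ {s | ∃ i, (∀ k', k' ≠ k → x i k' ≤ δ) ∧ s = x i k},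
      s ∈ Icc ((j : ℝ) / m) ((j + 1) / m) := fun j hj => by
    obtain ⟨i, hi⟩ := hcell j hj
    rw [mem_slabCell] at hi
    exact ⟨x i k, ⟨i, fun k' hk' => (hi.2 k' hk').2, rfl⟩, hi.1⟩
  refine ⟨fun i k' => hx i k' (mem_univ k'), fun a b ha hb hab => ?_⟩
  obtain ⟨s, hs, hab'⟩ := exists_mem_Ioo_of_forall_exists_mem_Icc hm hT ha hb (hG.trans_lt hab)
  exact ⟨s, Or.inr (Or.inr hs), hab'⟩

variable [Fintype ι]

lemma volume_sdiff_spacingEvent_le {n m : ℕ} (hm : 0 < m) (k : ι) {δ G : ℝ} (hδ0 : 0 ≤ δ)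
    (hδ1 : δ ≤ 1) (hG : 2 / m ≤ G) :
    volume ({x : Fin n → ι → ℝ | ∀ i, x i ∈ unitCube ι} \ spacingEvent n k δ G) ≤
      m * ENNReal.ofReal ((1 - δ ^ (Fintype.card ι - 1) / m) ^ n) := by
  have hm0 : (0 : ℝ) < m := by exact_mod_cast hm
  have hsub : {x : Fin n → ι → ℝ | ∀ i, x i ∈ unitCube ι} \ spacingEvent n k δ G ⊆
      ⋃ j ∈ Finset.range m,
        {x | ∀ i, x i ∈ unitCube ι \ slabCell k δ ((j : ℝ) / m) ((j + 1) / m)} := by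
    rintro x ⟨hx, hxE⟩
    by_contra hmiss
    refine hxE (mem_spacingEvent_of_forall_exists_mem_slabCell hm hG hx fun j hj => ?_)
    by_contra hj'
    exact hmiss (mem_iUnion₂.2 ⟨j, Finset.mem_range.2 hj, fun i => ⟨hx i, fun h => hj' ⟨i, h⟩⟩⟩)
  have hcell : ∀ j ∈ Finset.range m,
      volume {x : Fin n → ι → ℝ | ∀ i, x i ∈ unitCube ι \ slabCell k δ (j / m) ((j + 1) / m)} =
        ENNReal.ofReal ((1 - δ ^ (Fintype.card ι - 1) / m) ^ n) := by
    intro j hj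
    have hjm : (j : ℝ) + 1 ≤ m := by exact_mod_cast Finset.mem_range.1 hj
    have hwidth : ((j : ℝ) + 1) / m - j / m = 1 / m := by field_simp; ring
    rw [volume_setOf_forall_mem, volume_unitCube_diff_slabCell k hδ0 hδ1 (by positivity)
      (by gcongr; linarith) ((div_le_one hm0).2 hjm), Fintype.card_fin, hwidth, one_div_mul_eq_div,
      ← ENNReal.ofReal_pow (sub_nonneg.2 (pow_div_natCast_le_one hδ0 hδ1 hm _))]
  calc _ ≤ _ := measure_mono hsub
    _ ≤ _ := measure_biUnion_finset_le _ _
    _ = _ := by rw [Finset.sum_congr rfl hcell, Finset.sum_const, Finset.card_range, nsmul_eq_mul]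

lemma ofReal_one_sub_inv_le_volume_spacingEvent {n m : ℕ} (hm : 0 < m) (hmn : m ≤ n) (k : ι) {δ G : ℝ} (hδ0 : 0 ≤ δ) (hδ1 : δ ≤ 1)
    (hG : 2 / m ≤ G) (hlog : 2 * log n ≤ n * (δ ^ (Fintype.card ι - 1) / m)) :
    ENNReal.ofReal (1 - 1 / (n : ℝ)) ≤ volume (spacingEvent n k δ G) := by
  have hm0 : (0 : ℝ) < m := by exact_mod_cast hm
  have hn0 : (0 : ℝ) < n := hm0.trans_le (by exact_mod_cast hmn)
  have hp := pow_div_natCast_le_one hδ0 hδ1 hm (Fintype.card ι - 1)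
  have hunion : (m : ℝ) * (1 - δ ^ (Fintype.card ι - 1) / m) ^ n ≤ 1 / n :=
    calc (m : ℝ) * (1 - δ ^ (Fintype.card ι - 1) / m) ^ n ≤ n * (1 / (n : ℝ) ^ 2) :=
          mul_le_mul (by exact_mod_cast hmn)
            (one_sub_pow_le_inv_sq (hm.trans_le hmn) hp hlog)
            (pow_nonneg (sub_nonneg.2 hp) _) hn0.le
      _ = 1 / n := by field_simp
  refine ofReal_one_sub_le_measure (by rw [volume_setOf_forall_mem, volume_unitCube, one_pow])
    (by positivity) ((volume_sdiff_spacingEvent_le hm k hδ0 hδ1 hG).trans ?_)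
  rw [← ENNReal.ofReal_natCast, ← ENNReal.ofReal_mul hm0.le]
  exact ENNReal.ofReal_le_ofReal hunion

end Spacing

lemma exists_gridSize {n : ℕ} (hn : 3 ≤ n) {q G : ℝ} (hq0 : 0 < q) (hq1 : q ≤ 1) (hG1 : G < 1)
    (hG : 6 * log n / n ≤ G * q) :
    ∃ m : ℕ, 0 < m ∧ m ≤ n ∧ 2 / m ≤ G ∧ 2 * log n ≤ n * (q / m) := by
  have hn0 : (0 : ℝ) < n := by positivity
  have hlog : 1 ≤ log n := by
    rw [le_log_iff_exp_le hn0]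
    linarith [exp_one_lt_d9, (show (3 : ℝ) ≤ n by exact_mod_cast hn)]
  have hGq : 6 * log n ≤ n * (G * q) := by rwa [div_le_iff₀' hn0] at hG
  have hG0 : 0 < G :=
    pos_of_mul_pos_left (pos_of_mul_pos_right (by linarith) hn0.le) hq0.le
  set m := ⌈2 / G⌉₊
  have hm : 0 < m := Nat.ceil_pos.2 (by positivity)
  have hm0 : (0 : ℝ) < m := by exact_mod_cast hm
  have hmG : 2 ≤ m * G := (div_le_iff₀ hG0).1 (Nat.le_ceil _)
  have hmG3 : m * G < 3 := by
    have := Nat.ceil_lt_add_one (by positivity : 0 ≤ 2 / G)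
    calc m * G < (2 / G + 1) * G := by gcongr
      _ = 2 + G := by field_simp
      _ < 3 := by linarith
  have hkey : m * (2 * log n) ≤ n * q := by nlinarith
  refine ⟨m, hm, ?_, ?_, ?_⟩
  · exact_mod_cast (show (m : ℝ) ≤ n by nlinarith)
  · rw [div_le_iff₀ hm0]; linarith
  · rw [mul_div_assoc', le_div_iff₀ hm0]; linarith

theorem stmt19_general (K : ℕ) (k : Fin K) :
    ∃ f : ℕ → ℝ, (∃ C : ℝ, ∀ n : ℕ, 2 ≤ n → f n ≤ C * Real.log n / n) ∧
      ∃ N : ℕ, ∀ n : ℕ, N ≤ n → ∀ δ : ℝ, 0 < δ → δ ≤ 1 →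
        ENNReal.ofReal (1 - 1 / (n : ℝ)) ≤
        volume {x : Fin n → Fin K → ℝ |
          (∀ i k', x i k' ∈ Set.Icc (0:ℝ) 1) ∧
          ∀ a b : ℝ, 0 ≤ a → b ≤ 1 → f n / δ ^ (K - 1) < b - a →
            ∃ s : ℝ, (s = 0 ∨ s = 1 ∨ ∃ i, (∀ k', k' ≠ k → x i k' ≤ δ) ∧ s = x i k) ∧
              a < s ∧ s < b} := by
  refine ⟨fun n => 6 * log n / n, ⟨6, fun n _ => le_rfl⟩, 3, fun n hn δ hδ0 hδ1 => ?_⟩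
  change _ ≤ volume (spacingEvent n k δ (6 * log n / n / δ ^ (K - 1)))
  have hq0 : 0 < δ ^ (K - 1) := by positivity
  by_cases hG : 1 ≤ 6 * log n / n / δ ^ (K - 1)
  · rw [spacingEvent_eq_of_one_le k δ hG, volume_setOf_forall_mem, volume_unitCube, one_pow]
    exact ENNReal.ofReal_le_one.2 (by simp)
  · obtain ⟨m, hm, hmn, hmG, hlog⟩ := exists_gridSize hn hq0 (pow_le_one₀ hδ0.le hδ1)
      (not_le.1 hG) (div_mul_cancel₀ _ hq0.ne').ge
    exact ofReal_one_sub_inv_le_volume_spacingEvent hm hmn k hδ0.le hδ1 hmG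
      (by rwa [Fintype.card_fin])

/-- Maximum spacing in the box `R̃^k(δ)`: for `n` i.i.d. uniform points in `[0,1]^K`
there is `f(n) = O(log n / n)` such that with probability at least `1 − 1/n` (for `n`
large), the maximum gap between consecutive values of the `k`-th coordinates of points
falling in `R̃^k(δ) = {x : x^{k'} ≤ δ ∀ k' ≠ k}`, together with `{0,1}`, is at most
`f(n)/δ^{K−1}`.  The gap bound is expressed via the equivalent interval condition. -/
theorem stmt19 (K : ℕ) (hK : 1 ≤ K) (k : Fin K) :
    ∃ f : ℕ → ℝ, (∃ C : ℝ, ∀ n : ℕ, 2 ≤ n → f n ≤ C * Real.log n / n) ∧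
      ∃ N : ℕ, ∀ n : ℕ, N ≤ n → ∀ δ : ℝ, 0 < δ → δ ≤ 1 →
        ENNReal.ofReal (1 - 1 / (n : ℝ)) ≤
        volume {x : Fin n → Fin K → ℝ |
          (∀ i k', x i k' ∈ Set.Icc (0:ℝ) 1) ∧
          ∀ a b : ℝ, 0 ≤ a → b ≤ 1 → f n / δ ^ (K - 1) < b - a →
            ∃ s : ℝ, (s = 0 ∨ s = 1 ∨ ∃ i, (∀ k', k' ≠ k → x i k' ≤ δ) ∧ s = x i k) ∧
              a < s ∧ s < b} :=
  stmt19_general K k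
end
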